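/- In the category of modules over a semiring R, the composition of two normal epimorphisms is a normal epimorphism: if g : L → M and f : M → N are each coequalizers of some morphism with the zero map, then f ∘ g is also such a coequalizer. -/

import Mathlib

/-! Over a semiring, normal epimorphisms are exactly the surjections `f` through which every map
vanishing on `ker f` factors: surjectivity comes from factoring the corestriction
`M → range f` through `f` itself. Both conditions are stable under composition, because a
map vanishing on `ker (f ∘ g)` vanishes on `ker g`, and its factor through the surjection `g`
then vanishes on `ker f`. -/

universe u

/-- A bundled module over a semiring `R`. -/
structure BundledMod (R : Type u) [Semiring R] : Type (u + 1) where
  carrier : Type u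
  [addCommMonoid : AddCommMonoid carrier]
  [module : Module R carrier]

attribute [instance] BundledMod.addCommMonoid BundledMod.module

/-- `f` is a coequalizer of some morphism `g` and the zero map, expressed by the
universal property in the category of `R`-modules. -/
def IsNormalEpi {R : Type u} [Semiring R] {M N : Type u}
    [AddCommMonoid M] [Module R M] [AddCommMonoid N] [Module R N]
    (f : M →ₗ[R] N) : Prop :=
  ∃ (L : BundledMod R) (g : L.carrier →ₗ[R] M),
    (∀ l, f (g l) = 0) ∧
    ∀ (P : BundledMod R) (h : M →ₗ[R] P.carrier),
      (∀ l, h (g l) = 0) → ∃! u : N →ₗ[R] P.carrier, u.comp f = h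

namespace IsNormalEpi

variable {R : Type u} [Semiring R] {M N : Type u}
  [AddCommMonoid M] [Module R M] [AddCommMonoid N] [Module R N] {f : M →ₗ[R] N}

theorem exists_comp_eq (hf : IsNormalEpi f) {P : BundledMod R} (h : M →ₗ[R] P.carrier)
    (hker : ∀ x, f x = 0 → h x = 0) : ∃ u : N →ₗ[R] P.carrier, u.comp f = h := by
  obtain ⟨_, j, hj, huniv⟩ := hf
  exact (huniv P h fun w => hker _ (hj w)).exists

theorem surjective (hf : IsNormalEpi f) : Function.Surjective f := by
  obtain ⟨_, j, hj, huniv⟩ := hf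
  obtain ⟨u, hu, -⟩ := huniv ⟨LinearMap.range f⟩ f.rangeRestrict fun w => Subtype.ext (hj w)
  obtain ⟨_, -, hid⟩ := huniv ⟨N⟩ f hj
  have hsection : (LinearMap.range f).subtype.comp u = LinearMap.id :=
    (hid _ (show _ = f by rw [LinearMap.comp_assoc, hu]; rfl)).trans
      (hid _ (LinearMap.id_comp f)).symm
  intro n
  obtain ⟨x, hx⟩ := (u n).2
  exact ⟨x, hx.trans congr($hsection n)⟩

theorem of_surjective (hsurj : Function.Surjective f)
    (hfactor : ∀ (P : BundledMod R) (h : M →ₗ[R] P.carrier),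
      (∀ x, f x = 0 → h x = 0) → ∃ u : N →ₗ[R] P.carrier, u.comp f = h) :
    IsNormalEpi f := by
  refine ⟨⟨LinearMap.ker f⟩, (LinearMap.ker f).subtype, fun x => x.2, fun P h hh => ?_⟩
  obtain ⟨u, hu⟩ := hfactor P h fun x hx => hh ⟨x, hx⟩
  exact ⟨u, hu, fun v hv => (LinearMap.cancel_right hsurj).mp (hv.trans hu.symm)⟩

end IsNormalEpi

/-- In the category of modules over a semiring, the composition of two normal
epimorphisms (coequalizers of some morphism with the zero map) is again a normal
epimorphism. -/
theorem stmt7 {R : Type u} [Semiring R] {L M N : Type u}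
    [AddCommMonoid L] [Module R L] [AddCommMonoid M] [Module R M]
    [AddCommMonoid N] [Module R N]
    (g : L →ₗ[R] M) (f : M →ₗ[R] N)
    (hg : IsNormalEpi g) (hf : IsNormalEpi f) :
    IsNormalEpi (f.comp g) := by
  refine IsNormalEpi.of_surjective (hf.surjective.comp hg.surjective) fun P h hker => ?_
  obtain ⟨h₁, rfl⟩ := hg.exists_comp_eq h fun x hx => hker x (by simp [hx])
  have hker₁ : ∀ y, f y = 0 → h₁ y = 0 := by
    intro y hy
    obtain ⟨x, rfl⟩ := hg.surjective y
    exact hker x hy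
  obtain ⟨u, rfl⟩ := hf.exists_comp_eq h₁ hker₁
  exact ⟨u, LinearMap.comp_assoc g f u⟩
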